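/- Let M be a free ℤ-module of finite rank with a symmetric ℤ-bilinear form Q : M × M → ℤ, extended ℝ-bilinearly to a pairing ⟨·,·⟩ : M × (M ⊗ ℝ) → ℝ. Let χ, c₁² ∈ ℤ and set c := χ − c₁². Let B ⊂ M be a finite subset with 0 ∉ B and −K ∈ B whenever K ∈ B, and let B' ⊆ B be a fundamental domain for negation (B is the disjoint union of B' and −B'). Let SW : B → ℤ satisfy SW(−K) = (−1)^χ SW(K) for all K ∈ B. Let w ∈ M be characteristic for Q (Q(x,x) ≡ Q(w,x) (mod 2) for all x ∈ M), with Q(w,w) ≡ c₁² (mod 2), and suppose Q(K,K) = c₁² for every K ∈ B (simple type). For K ∈ B define the integer ε(K) := (Q(w,w) + Q(w,K))/2. Assume the superconformal vanishing condition: for every natural number i ≤ c − 4 and every h ∈ M ⊗ ℝ, Σ_{K ∈ B} (−1)^{ε(K)} SW(K) ⟨K, h⟩^i = 0. Then for all natural numbers j, u with j + u < c − 3 and j + u ≡ c (mod 2), and all h_1, h_2 ∈ M ⊗ ℝ, Σ_{K ∈ B'} (−1)^{ε(K)} SW(K) ⟨K, h_1⟩^j ⟨K, h_2⟩^u = 0.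 -/

import Mathlib

/-!
Put `h = t • h₁ + h₂` and `i = j + u` in the vanishing condition: the result is a polynomial
in `t` that vanishes identically, and its `tʲ` coefficient is `(j+u).choose j` times the sum
over `B`. That sum is twice the sum over `B'`, because the summand is invariant under
`K ↦ -K`: the pairings contribute `(-1)^(j+u)`, `SW` contributes `(-1)^χ`, and `ε` changes by
`Q(w,K) ≡ c₁²`, and these signs cancel by the parity condition on `j + u`.
-/

open TensorProduct

open Polynomial in
theorem Polynomial.coeff_C_mul_X_add_C_pow {R : Type*} [CommSemiring R] (a b : R) (n k : ℕ) :
    ((C a * X + C b) ^ n).coeff k = a ^ k * b ^ (n - k) * n.choose k := by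
  have : (C a * X + C b) ^ n = ((X + C b) ^ n).comp (C a * X) := by
    simp only [pow_comp, add_comp, X_comp, C_comp]
  rw [this, comp_C_mul_X_coeff, coeff_X_add_C_pow]
  ring

open Polynomial in
theorem Finset.sum_mul_pow_mul_pow_eq_zero_of_forall_sum_mul_add_pow_eq_zero
    {ι F : Type*} [Field F] [CharZero F] (s : Finset ι) (a x y : ι → F) (j u : ℕ)
    (h : ∀ t : F, ∑ k ∈ s, a k * (x k * t + y k) ^ (j + u) = 0) :
    ∑ k ∈ s, a k * x k ^ j * y k ^ u = 0 := by
  set P : F[X] := ∑ k ∈ s, C (a k) * (C (x k) * X + C (y k)) ^ (j + u)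
  have hP : P = 0 := Polynomial.funext fun t => by simpa [P, eval_finsetSum] using h t
  have hcoeff := congr_arg (coeff · j) hP
  simp only [P, finsetSum_coeff, coeff_C_mul, coeff_C_mul_X_add_C_pow, Nat.add_sub_cancel_left,
    coeff_zero, ← mul_assoc, ← Finset.sum_mul] at hcoeff
  exact (mul_eq_zero.mp hcoeff).resolve_right (by exact_mod_cast (Nat.choose_pos (by omega)).ne')

theorem Finset.sum_union_image_neg {M R : Type*} [DecidableEq M] [InvolutiveNeg M]
    [AddCommMonoid R] {s : Finset M} (hs : Disjoint s (s.image fun K => -K)) {f : M → R}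
    (hf : ∀ K ∈ s, f (-K) = f K) :
    ∑ K ∈ s ∪ s.image (fun K => -K), f K = 2 • ∑ K ∈ s, f K := by
  rw [Finset.sum_union hs, Finset.sum_image neg_injective.injOn, Finset.sum_congr rfl hf,
    two_nsmul]

theorem neg_one_zpow_congr {α : Type*} [DivisionRing α] {a b : ℤ} (h : a ≡ b [ZMOD 2]) :
    (-1 : α) ^ a = (-1) ^ b := by
  simp only [neg_one_zpow_eq_ite, Int.even_iff, Int.ModEq.eq h]

section Pairing

variable {M : Type*} [AddCommGroup M] {Q : M →ₗ[ℤ] M →ₗ[ℤ] ℤ}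
  {pair : M → (ℝ ⊗[ℤ] M) →ₗ[ℝ] ℝ}

theorem pair_neg (hpair : ∀ x y : M, pair x ((1 : ℝ) ⊗ₜ[ℤ] y) = (Q x y : ℝ)) (x : M) :
    pair (-x) = -pair x :=
  TensorProduct.AlgebraTensorModule.ext fun r y => by
    rw [← mul_one r, ← smul_eq_mul, ← smul_tmul', map_smul, map_smul, LinearMap.neg_apply,
      hpair, hpair, map_neg, LinearMap.neg_apply, Int.cast_neg, smul_neg]

theorem polarized_summand_neg (hpair : ∀ x y : M, pair x ((1 : ℝ) ⊗ₜ[ℤ] y) = (Q x y : ℝ))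
    {χ c₁sq : ℤ} {SW : M → ℤ} {w K : M}
    (hSWK : (SW (-K) : ℝ) = (-1 : ℝ) ^ χ * (SW K : ℝ))
    (hwK : Q K K ≡ Q w K [ZMOD 2]) (hw2 : Q w w ≡ c₁sq [ZMOD 2]) (hK : Q K K = c₁sq)
    {j u : ℕ} (hparity : (j : ℤ) + (u : ℤ) ≡ (χ - c₁sq) [ZMOD 2]) (h₁ h₂ : ℝ ⊗[ℤ] M) :
    (-1 : ℝ) ^ ((Q w w + Q w (-K)) / 2) * (SW (-K) : ℝ) *
        (pair (-K) h₁) ^ j * (pair (-K) h₂) ^ u =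
      (-1 : ℝ) ^ ((Q w w + Q w K) / 2) * (SW K : ℝ) * (pair K h₁) ^ j * (pair K h₂) ^ u := by
  have hsign : (-1 : ℝ) ^ ((Q w w + Q w (-K)) / 2 + χ + ((j + u : ℕ) : ℤ)) =
      (-1 : ℝ) ^ ((Q w w + Q w K) / 2) := by
    refine neg_one_zpow_congr ?_
    rw [map_neg]
    simp only [Int.ModEq] at hwK hw2 hparity ⊢
    omega
  rw [zpow_add₀ (by norm_num), zpow_add₀ (by norm_num), zpow_natCast, pow_add] at hsign
  rw [pair_neg hpair, hSWK, ← hsign, LinearMap.neg_apply, LinearMap.neg_apply, neg_pow,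
    neg_pow (pair K h₂)]
  ring

end Pairing

theorem superconformal_polarized_vanishing_general
    {M : Type*} [AddCommGroup M] [DecidableEq M]
    (Q : M →ₗ[ℤ] M →ₗ[ℤ] ℤ)
    (pair : M → (ℝ ⊗[ℤ] M) →ₗ[ℝ] ℝ)
    (hpair : ∀ x y : M, pair x ((1 : ℝ) ⊗ₜ[ℤ] y) = (Q x y : ℝ))
    (χ c₁sq : ℤ)
    (B B' : Finset M)
    (hBunion : B = B' ∪ B'.image (fun K => -K))
    (hBdisj : Disjoint B' (B'.image (fun K => -K)))
    (SW : M → ℤ)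
    (hSW : ∀ K ∈ B, (SW (-K) : ℝ) = (-1 : ℝ) ^ χ * (SW K : ℝ))
    (w : M)
    (hwchar : ∀ x : M, Q x x ≡ Q w x [ZMOD 2])
    (hw2 : Q w w ≡ c₁sq [ZMOD 2])
    (hsimple : ∀ K ∈ B, Q K K = c₁sq)
    (hsuper : ∀ i : ℕ, (i : ℤ) ≤ (χ - c₁sq) - 4 → ∀ h : ℝ ⊗[ℤ] M,
      ∑ K ∈ B, (-1 : ℝ) ^ ((Q w w + Q w K) / 2) * (SW K : ℝ) * (pair K h) ^ i = 0)
    (j u : ℕ) (hju : (j : ℤ) + (u : ℤ) < (χ - c₁sq) - 3)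
    (hparity : (j : ℤ) + (u : ℤ) ≡ (χ - c₁sq) [ZMOD 2])
    (h₁ h₂ : ℝ ⊗[ℤ] M) :
    ∑ K ∈ B', (-1 : ℝ) ^ ((Q w w + Q w K) / 2) * (SW K : ℝ) *
      (pair K h₁) ^ j * (pair K h₂) ^ u = 0 := by
  have hB : ∑ K ∈ B, (-1 : ℝ) ^ ((Q w w + Q w K) / 2) * (SW K : ℝ) *
      (pair K h₁) ^ j * (pair K h₂) ^ u = 0 := by
    refine B.sum_mul_pow_mul_pow_eq_zero_of_forall_sum_mul_add_pow_eq_zero _ _ _ j u fun t => ?_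
    simpa only [map_add, map_smul, smul_eq_mul, mul_comm t] using
      hsuper (j + u) (by push_cast; omega) (t • h₁ + h₂)
  have hB' : B' ⊆ B := hBunion ▸ Finset.subset_union_left
  rw [hBunion, Finset.sum_union_image_neg hBdisj fun K hK => polarized_summand_neg hpair
    (hSW K (hB' hK)) (hwchar K) hw2 (hsimple K (hB' hK)) hparity h₁ h₂, two_nsmul] at hB
  linarith

/-- **Lemma 5.1 (polarized superconformal vanishing).** Let `M` be a free ℤ-module of
finite rank with symmetric bilinear form `Q`, extended ℝ-bilinearly to a pairing
`pair : M → (ℝ ⊗[ℤ] M) →ₗ[ℝ] ℝ`. Let `B` be a finite set of `basic classes` with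
`0 ∉ B`, closed under negation, with fundamental domain `B'` for negation, and let
`SW : M → ℤ` satisfy `SW(−K) = (−1)^χ SW(K)` on `B`. Let `w` be characteristic for `Q`
with `Q(w,w) ≡ c₁² (mod 2)` and `Q(K,K) = c₁²` for all `K ∈ B`, and set
`ε(K) = (Q(w,w) + Q(w,K))/2` and `c = χ − c₁²`. If the superconformal vanishing
condition `Σ_{K ∈ B} (−1)^{ε(K)} SW(K) ⟨K,h⟩^i = 0` holds for all `i ≤ c − 4` and all
`h`, then for all `j + u < c − 3` with `j + u ≡ c (mod 2)` and all `h₁, h₂`,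
`Σ_{K ∈ B'} (−1)^{ε(K)} SW(K) ⟨K,h₁⟩^j ⟨K,h₂⟩^u = 0`. -/
theorem superconformal_polarized_vanishing
    {M : Type*} [AddCommGroup M] [DecidableEq M] [Module.Free ℤ M] [Module.Finite ℤ M]
    (Q : M →ₗ[ℤ] M →ₗ[ℤ] ℤ) (hQsymm : ∀ x y : M, Q x y = Q y x)
    (pair : M → (ℝ ⊗[ℤ] M) →ₗ[ℝ] ℝ)
    (hpair : ∀ x y : M, pair x ((1 : ℝ) ⊗ₜ[ℤ] y) = (Q x y : ℝ))
    (χ c₁sq : ℤ)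
    (B B' : Finset M) (hB0 : (0 : M) ∉ B)
    (hBneg : ∀ K ∈ B, -K ∈ B)
    (hBunion : B = B' ∪ B'.image (fun K => -K))
    (hBdisj : Disjoint B' (B'.image (fun K => -K)))
    (SW : M → ℤ)
    (hSW : ∀ K ∈ B, (SW (-K) : ℝ) = (-1 : ℝ) ^ χ * (SW K : ℝ))
    (w : M)
    (hwchar : ∀ x : M, Q x x ≡ Q w x [ZMOD 2])
    (hw2 : Q w w ≡ c₁sq [ZMOD 2])
    (hsimple : ∀ K ∈ B, Q K K = c₁sq)
    (hsuper : ∀ i : ℕ, (i : ℤ) ≤ (χ - c₁sq) - 4 → ∀ h : ℝ ⊗[ℤ] M,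
      ∑ K ∈ B, (-1 : ℝ) ^ ((Q w w + Q w K) / 2) * (SW K : ℝ) * (pair K h) ^ i = 0)
    (j u : ℕ) (hju : (j : ℤ) + (u : ℤ) < (χ - c₁sq) - 3)
    (hparity : (j : ℤ) + (u : ℤ) ≡ (χ - c₁sq) [ZMOD 2])
    (h₁ h₂ : ℝ ⊗[ℤ] M) :
    ∑ K ∈ B', (-1 : ℝ) ^ ((Q w w + Q w K) / 2) * (SW K : ℝ) *
      (pair K h₁) ^ j * (pair K h₂) ^ u = 0 :=
  superconformal_polarized_vanishing_general Q pair hpair χ c₁sq B B' hBunion hBdisj SW hSW w hwchar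
    hw2 hsimple hsuper j u hju hparity h₁ h₂
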